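/- arXiv:0812.0870 — 3 statements merged into one kernel-verified Lean document; each statement's English description precedes it below -/
import Mathlib

section
/- The simple graph G on vertex set {1,2,3,4,5,6,7} with edge set {{1,2},{1,5},{2,3},{2,6},{2,7},{3,4},{3,6},{4,5},{4,6},{5,6},{5,7}} (graph number 846 in the Atlas of Graphs) has minimum rank 3 over the real numbers. -/
/-- Edge list of graph number 846 in the Atlas of Graphs (vertices 1..7). -/
def atlas846Edges : List (ℕ × ℕ) := [(1,2),(1,5),(2,3),(2,6),(2,7),(3,4),(3,6),(4,5),(4,6),(5,6),(5,7)]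

/-! Vertices 1, 2, 3, 4 induce a path, so every matrix with the pattern of the graph has a
3×3 minor (rows 1, 2, 3, columns 2, 3, 4) that is triangular with nonzero diagonal; hence its
rank is at least 3. Conversely, a witness of rank at most 3 is `Cᵀ · diag(1, 1, -1) · C` for a
3×7 matrix `C`. -/

namespace Matrix

variable {m n ι K : Type*} [Fintype n] [Fintype ι] [DecidableEq ι] [Field K]

theorem card_le_rank_of_det_submatrix_ne_zero (A : Matrix m n K) (r : ι → m) (c : ι → n)
    (h : (A.submatrix r c).det ≠ 0) : Fintype.card ι ≤ A.rank :=
  (rank_of_isUnit _ ((isUnit_iff_isUnit_det _).2 h.isUnit)).ge.trans (rank_submatrix_le A r c)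

theorem three_le_rank_of_inducedPath (A : Matrix n n K) {a b c d : n}
    (hab : A a b ≠ 0) (hbc : A b c ≠ 0) (hcd : A c d ≠ 0)
    (hac : A a c = 0) (had : A a d = 0) (hbd : A b d = 0) : 3 ≤ A.rank := by
  have hdet : (A.submatrix ![a, b, c] ![b, c, d]).det ≠ 0 := by
    rw [det_fin_three]
    simp [hac, had, hbd, hab, hbc, hcd]
  simpa using A.card_le_rank_of_det_submatrix_ne_zero _ _ hdet

end Matrix

def IsAtlas846Pattern {R : Type*} [Zero R] (A : Matrix (Fin 7) (Fin 7) R) : Prop :=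
  ∀ i j : Fin 7, i ≠ j →
    (A i j ≠ 0 ↔
      ((i.val + 1, j.val + 1) ∈ atlas846Edges ∨ (j.val + 1, i.val + 1) ∈ atlas846Edges))

theorem IsAtlas846Pattern.three_le_rank {A : Matrix (Fin 7) (Fin 7) ℝ}
    (hA : IsAtlas846Pattern A) : 3 ≤ A.rank := by
  have edge (i j : Fin 7) (hij : i ≠ j) (h : (i.val + 1, j.val + 1) ∈ atlas846Edges) :
      A i j ≠ 0 :=
    (hA i j hij).2 (Or.inl h)
  have nonedge (i j : Fin 7) (hij : i ≠ j) (h : (i.val + 1, j.val + 1) ∉ atlas846Edges)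
      (h' : (j.val + 1, i.val + 1) ∉ atlas846Edges) : A i j = 0 :=
    not_not.1 fun hne => ((hA i j hij).1 hne).elim h h'
  exact A.three_le_rank_of_inducedPath (a := 0) (b := 1) (c := 2) (d := 3)
    (edge _ _ (by decide) (by decide)) (edge _ _ (by decide) (by decide))
    (edge _ _ (by decide) (by decide)) (nonedge _ _ (by decide) (by decide) (by decide))
    (nonedge _ _ (by decide) (by decide) (by decide))
    (nonedge _ _ (by decide) (by decide) (by decide))

def atlas846Witness : Matrix (Fin 7) (Fin 7) ℝ :=
  !![0, 1, 0, 0, 1, 0, 0;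
     1, -1, -3, 0, 0, -2, 1;
     0, -3, 1, 1, 0, 1, 0;
     0, 0, 1, 1, 3, 1, 0;
     1, 0, 0, 3, 10, 1, 1;
     0, -2, 1, 1, 1, 1, 0;
     0, 1, 0, 0, 1, 0, 0]

def atlas846Factor : Matrix (Fin 3) (Fin 7) ℝ :=
  !![0, 0, 1, 1, 3, 1, 0;
     1, 0, -3, 0, 1, -2, 1;
     1, -1, -3, 0, 0, -2, 1]

theorem atlas846Witness_eq :
    atlas846Witness =
      atlas846Factor.transpose * Matrix.diagonal (![1, 1, -1] : Fin 3 → ℝ) *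
        atlas846Factor := by
  ext i j
  fin_cases i <;> fin_cases j <;>
    simp [atlas846Witness, atlas846Factor, Matrix.mul_apply, Fin.sum_univ_three] <;> norm_num

theorem atlas846Witness_rank_le : atlas846Witness.rank ≤ 3 := by
  rw [atlas846Witness_eq]
  exact (Matrix.rank_mul_le_right _ _).trans atlas846Factor.rank_le_height

theorem atlas846Witness_isSymm : atlas846Witness.IsSymm :=
  Matrix.IsSymm.ext fun i j => by fin_cases i <;> fin_cases j <;> rfl

theorem isAtlas846Pattern_atlas846Witness : IsAtlas846Pattern atlas846Witness := by
  intro i j hij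
  fin_cases i <;> fin_cases j <;> simp_all [atlas846Witness, atlas846Edges]

/-- Graph number 846 in the Atlas of Graphs has minimum rank 3 over the reals:
3 is the least element of the set of ranks of real symmetric 7×7 matrices whose
off-diagonal zero/nonzero pattern matches the edges of the graph. -/
theorem atlas846_minRank_eq_three :
    IsLeast {r : ℕ | ∃ A : Matrix (Fin 7) (Fin 7) ℝ, A.IsSymm ∧
        (∀ i j : Fin 7, i ≠ j →
          (A i j ≠ 0 ↔
            ((i.val + 1, j.val + 1) ∈ atlas846Edges ∨
             (j.val + 1, i.val + 1) ∈ atlas846Edges))) ∧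
        A.rank = r} 3 := by
  refine ⟨⟨atlas846Witness, atlas846Witness_isSymm, isAtlas846Pattern_atlas846Witness,
    atlas846Witness_rank_le.antisymm isAtlas846Pattern_atlas846Witness.three_le_rank⟩, ?_⟩
  rintro r ⟨A, -, hA, rfl⟩
  exact IsAtlas846Pattern.three_le_rank hA
end

section
/- The simple graph G on vertex set {1,2,3,4,5,6,7} with edge set {{1,2},{1,5},{1,7},{2,3},{2,6},{2,7},{3,4},{3,6},{4,5},{4,6},{5,7}} (graph number 878 in the Atlas of Graphs) has minimum rank 3 over the real numbers. -/
/-!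
The minor of a pattern matrix on rows {1,2,3} and columns {4,5,6} has zeros forced exactly so
that it is a row permutation of a triangular matrix whose diagonal is the edges 1–5, 2–6, 3–4;
its determinant is therefore nonzero and every pattern matrix has rank at least 3.
Conversely the Gram matrix of seven vectors in ℝ³ realises the pattern with rank at most 3.
-/

/-- Edge list of graph number 878 in the Atlas of Graphs (vertices 1..7). -/
def atlas878Edges : List (ℕ × ℕ) := [(1,2),(1,5),(1,7),(2,3),(2,6),(2,7),(3,4),(3,6),(4,5),(4,6),(5,7)]

open Matrix

theorem Matrix.card_le_rank_of_det_submatrix_ne_zero_s8 {m n ι R : Type*} [Fintype n] [Fintype ι]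
    [DecidableEq ι] [CommRing R] [IsDomain R] (A : Matrix m n R) (r : ι → m) (c : ι → n)
    (h : (A.submatrix r c).det ≠ 0) : Fintype.card ι ≤ A.rank :=
  rank_of_det_ne_zero h ▸ rank_submatrix_le A r c

def HasAtlas878Pattern {R : Type*} [Zero R] (A : Matrix (Fin 7) (Fin 7) R) : Prop :=
  ∀ i j : Fin 7, i ≠ j →
    (A i j ≠ 0 ↔
      ((i.val + 1, j.val + 1) ∈ atlas878Edges ∨ (j.val + 1, i.val + 1) ∈ atlas878Edges))

namespace HasAtlas878Pattern

variable {R : Type*} [Zero R] {A : Matrix (Fin 7) (Fin 7) R}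

theorem apply_eq_zero (hA : HasAtlas878Pattern A) {i j : Fin 7} (hij : i ≠ j)
    (hnot : ¬((i.val + 1, j.val + 1) ∈ atlas878Edges ∨ (j.val + 1, i.val + 1) ∈ atlas878Edges)) :
    A i j = 0 :=
  not_not.mp (mt (hA i j hij).mp hnot)

theorem apply_ne_zero (hA : HasAtlas878Pattern A) {i j : Fin 7} (hij : i ≠ j)
    (hedge : (i.val + 1, j.val + 1) ∈ atlas878Edges ∨ (j.val + 1, i.val + 1) ∈ atlas878Edges) :
    A i j ≠ 0 :=
  (hA i j hij).mpr hedge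

theorem map {S : Type*} [Zero S] (hA : HasAtlas878Pattern A) {f : R → S}
    (hf : ∀ x, f x = 0 ↔ x = 0) : HasAtlas878Pattern (A.map f) := by
  intro i j hij
  rw [map_apply, ne_eq, hf]
  exact hA i j hij

theorem three_le_rank {K : Type*} [Field K] {A : Matrix (Fin 7) (Fin 7) K}
    (hA : HasAtlas878Pattern A) : 3 ≤ A.rank := by
  have hdet : (A.submatrix ![0, 1, 2] ![3, 4, 5]).det = A 0 4 * A 1 5 * A 2 3 := by
    rw [det_fin_three]
    simp only [submatrix_apply, Matrix.cons_val]
    rw [hA.apply_eq_zero (i := 0) (j := 3) (by decide) (by decide),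
      hA.apply_eq_zero (i := 0) (j := 5) (by decide) (by decide),
      hA.apply_eq_zero (i := 1) (j := 3) (by decide) (by decide),
      hA.apply_eq_zero (i := 1) (j := 4) (by decide) (by decide),
      hA.apply_eq_zero (i := 2) (j := 4) (by decide) (by decide)]
    ring
  have hminor : (A.submatrix ![0, 1, 2] ![3, 4, 5]).det ≠ 0 := by
    rw [hdet]
    exact mul_ne_zero (mul_ne_zero (hA.apply_ne_zero (by decide) (by decide))
      (hA.apply_ne_zero (by decide) (by decide))) (hA.apply_ne_zero (by decide) (by decide))
  simpa using card_le_rank_of_det_submatrix_ne_zero_s8 A _ _ hminor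

end HasAtlas878Pattern

def atlas878Factor : Matrix (Fin 7) (Fin 3) ℤ :=
  !![1, 1, 1; 1, 1, 0; 1, 0, -1; 1, -1, 0; 1, -1, 1; 1, 0, -1; 1, 1, 1]

theorem hasAtlas878Pattern_factor_mul_transpose :
    HasAtlas878Pattern (atlas878Factor * atlas878Factorᵀ) := by
  unfold HasAtlas878Pattern atlas878Factor
  decide

noncomputable def atlas878Gram : Matrix (Fin 7) (Fin 7) ℝ :=
  (atlas878Factor * atlas878Factorᵀ).map (Int.castRingHom ℝ)

theorem isSymm_atlas878Gram : atlas878Gram.IsSymm := by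
  refine IsSymm.map ?_ _
  rw [IsSymm, transpose_mul, transpose_transpose]

theorem hasAtlas878Pattern_atlas878Gram : HasAtlas878Pattern atlas878Gram :=
  hasAtlas878Pattern_factor_mul_transpose.map fun _ => Int.cast_eq_zero

theorem rank_atlas878Gram_le : atlas878Gram.rank ≤ 3 := by
  rw [atlas878Gram, Matrix.map_mul]
  exact (rank_mul_le_left _ _).trans ((rank_le_card_width _).trans_eq (Fintype.card_fin 3))

/-- Graph number 878 in the Atlas of Graphs has minimum rank 3 over the reals:
3 is the least element of the set of ranks of real symmetric 7×7 matrices whose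
off-diagonal zero/nonzero pattern matches the edges of the graph. -/
theorem atlas878_minRank_eq_three :
    IsLeast {r : ℕ | ∃ A : Matrix (Fin 7) (Fin 7) ℝ, A.IsSymm ∧
        (∀ i j : Fin 7, i ≠ j →
          (A i j ≠ 0 ↔
            ((i.val + 1, j.val + 1) ∈ atlas878Edges ∨
             (j.val + 1, i.val + 1) ∈ atlas878Edges))) ∧
        A.rank = r} 3 := by
  refine ⟨⟨atlas878Gram, isSymm_atlas878Gram, hasAtlas878Pattern_atlas878Gram,
    rank_atlas878Gram_le.antisymm hasAtlas878Pattern_atlas878Gram.three_le_rank⟩, ?_⟩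
  rintro r ⟨A, -, hA, rfl⟩
  exact HasAtlas878Pattern.three_le_rank hA
end

section
/- The simple graph G on vertex set {1,2,3,4,5,6,7} with edge set {{1,2},{1,3},{1,7},{2,3},{2,5},{2,6},{2,7},{3,4},{3,7},{4,5},{4,6},{4,7}} (graph number 944 in the Atlas of Graphs) has minimum rank 3 over the real numbers. -/
/-!
In rows 2, 1, 5 and columns 6, 3, 2, a matrix with the off-diagonal pattern of the graph is upper
triangular with nonzero diagonal: the diagonal sits on the edges 26, 13, 25 and the entries below
it on the non-edges 16, 56, 35. So the rank is at least 3. Conversely `Bᵀ diag(1, 1, -1) B`, for a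
suitable `3 × 7` matrix `B`, is symmetric, has the pattern and has rank at most 3.
-/

/-- Edge list of graph number 944 in the Atlas of Graphs (vertices 1..7). -/
def atlas944Edges : List (ℕ × ℕ) := [(1,2),(1,3),(1,7),(2,3),(2,5),(2,6),(2,7),(3,4),(3,7),(4,5),(4,6),(4,7)]

namespace Matrix

theorem card_le_rank_of_isUpperTriangular_submatrix {m n ι R : Type*} [CommRing R] [IsDomain R]
    [Fintype n] [Fintype ι] [LinearOrder ι] (A : Matrix m n R) (r : ι → m) (c : ι → n)
    (htri : (A.submatrix r c).IsUpperTriangular)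
    (hdiag : ∀ i, A (r i) (c i) ≠ 0) : Fintype.card ι ≤ A.rank := by
  classical
  calc Fintype.card ι = (A.submatrix r c * 1).rank := by
        rw [rank_mul_eq_right_of_isUpperTriangular _ _ htri hdiag, rank_one]
    _ ≤ A.rank := by simpa using rank_submatrix_le A r c

section Pattern

variable {n R : Type*} [Zero R]

def HasGraphPattern (A : Matrix n n R) (adj : n → n → Prop) : Prop :=
  ∀ i j, i ≠ j → (A i j ≠ 0 ↔ adj i j)

theorem HasGraphPattern.ne_zero {A : Matrix n n R} {adj : n → n → Prop}
    (hA : A.HasGraphPattern adj) {i j : n} (hij : i ≠ j) (h : adj i j) : A i j ≠ 0 :=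
  (hA i j hij).2 h

theorem HasGraphPattern.eq_zero {A : Matrix n n R} {adj : n → n → Prop}
    (hA : A.HasGraphPattern adj) {i j : n} (hij : i ≠ j) (h : ¬adj i j) : A i j = 0 :=
  not_not.1 (mt (hA i j hij).1 h)

end Pattern

end Matrix

open Matrix

abbrev atlas944Adj (i j : Fin 7) : Prop :=
  (i.val + 1, j.val + 1) ∈ atlas944Edges ∨ (j.val + 1, i.val + 1) ∈ atlas944Edges

theorem three_le_rank_of_hasGraphPattern_atlas944 {R : Type*} [CommRing R] [IsDomain R]
    {A : Matrix (Fin 7) (Fin 7) R} (hA : A.HasGraphPattern atlas944Adj) : 3 ≤ A.rank := by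
  refine le_of_eq_of_le (Fintype.card_fin 3).symm
    (card_le_rank_of_isUpperTriangular_submatrix A ![1, 0, 4] ![5, 2, 1] ?_ fun i => ?_)
  · intro i j hji
    fin_cases i <;> fin_cases j <;> first
      | exact absurd hji (by decide)
      | exact hA.eq_zero (by decide) (by decide)
  · fin_cases i <;> exact hA.ne_zero (by decide) (by decide)

def atlas944Factor : Matrix (Fin 3) (Fin 7) ℝ :=
  !![1, 2, 1, 0, 0, 0, 1;
     0, 0, 1, 1, 1, 1, -1;
     0, 1, 1, 0, 1, 1, -1]

def atlas944Witness : Matrix (Fin 7) (Fin 7) ℝ :=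
  !![1, 2, 1, 0, 0, 0, 1;
     2, 3, 1, 0, -1, -1, 3;
     1, 1, 1, 1, 0, 0, 1;
     0, 0, 1, 1, 1, 1, -1;
     0, -1, 0, 1, 0, 0, 0;
     0, -1, 0, 1, 0, 0, 0;
     1, 3, 1, -1, 0, 0, 1]

theorem atlas944Witness_eq :
    atlas944Witness = atlas944Factorᵀ * diagonal ![(1 : ℝ), 1, -1] * atlas944Factor := by
  ext i j
  fin_cases i <;> fin_cases j <;>
    norm_num [atlas944Witness, atlas944Factor, mul_apply, Fin.sum_univ_succ, diagonal_apply]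

theorem atlas944Witness_isSymm : atlas944Witness.IsSymm := by
  simp [atlas944Witness_eq, IsSymm, transpose_mul, Matrix.mul_assoc]

theorem rank_atlas944Witness_le : atlas944Witness.rank ≤ 3 := by
  rw [atlas944Witness_eq]
  exact (rank_mul_le_right _ _).trans (by simpa using rank_le_card_height atlas944Factor)

theorem atlas944Witness_hasGraphPattern : atlas944Witness.HasGraphPattern atlas944Adj := by
  intro i j hij
  fin_cases i <;> fin_cases j <;> first
    | exact absurd rfl hij
    | norm_num [atlas944Witness, atlas944Adj, atlas944Edges]

/-- Graph number 944 in the Atlas of Graphs has minimum rank 3 over the reals: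
3 is the least element of the set of ranks of real symmetric 7×7 matrices whose
off-diagonal zero/nonzero pattern matches the edges of the graph. -/
theorem atlas944_minRank_eq_three :
    IsLeast {r : ℕ | ∃ A : Matrix (Fin 7) (Fin 7) ℝ, A.IsSymm ∧
        (∀ i j : Fin 7, i ≠ j →
          (A i j ≠ 0 ↔
            ((i.val + 1, j.val + 1) ∈ atlas944Edges ∨
             (j.val + 1, i.val + 1) ∈ atlas944Edges))) ∧
        A.rank = r} 3 := by
  refine ⟨⟨atlas944Witness, atlas944Witness_isSymm, atlas944Witness_hasGraphPattern,
    rank_atlas944Witness_le.antisymm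
      (three_le_rank_of_hasGraphPattern_atlas944 atlas944Witness_hasGraphPattern)⟩, ?_⟩
  rintro r ⟨A, -, hA, rfl⟩
  exact three_le_rank_of_hasGraphPattern_atlas944 hA
end
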